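/- Let G_w be a weighted graph containing a pendant vertex v whose unique neighbor is u. Then i_+(G_w) = i_+(G_w − u − v) + 1 and i_-(G_w) = i_-(G_w − u − v) + 1, where G_w − u − v is the weighted graph induced on the vertices other than u and v (with the same weights on the remaining edges). -/

import Mathlib

open Matrix

/-- The positive inertia index of a matrix: the number of positive eigenvalues
(counted with multiplicity) if the matrix is Hermitian, and `0` otherwise. -/
noncomputable def posInertia {k 𝕜 : Type*} [RCLike 𝕜] [Fintype k] [DecidableEq k]
    (A : Matrix k k 𝕜) : ℕ :=
  if h : A.IsHermitian then Fintype.card {i // 0 < h.eigenvalues i} else 0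

/-- The negative inertia index of a matrix. -/
noncomputable def negInertia {k 𝕜 : Type*} [RCLike 𝕜] [Fintype k] [DecidableEq k]
    (A : Matrix k k 𝕜) : ℕ :=
  if h : A.IsHermitian then Fintype.card {i // h.eigenvalues i < 0} else 0

/-- The nullity of a matrix: the number of zero eigenvalues. -/
noncomputable def nulInertia {k 𝕜 : Type*} [RCLike 𝕜] [Fintype k] [DecidableEq k]
    (A : Matrix k k 𝕜) : ℕ :=
  if h : A.IsHermitian then Fintype.card {i // h.eigenvalues i = 0} else 0

/-- A weighted graph: a simple graph together with a symmetric weight function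
which is positive on all edges. -/
structure WeightedGraph (V : Type*) where
  G : SimpleGraph V
  w : V → V → ℝ
  symm : ∀ u v : V, w u v = w v u
  pos : ∀ u v : V, G.Adj u v → 0 < w u v

open Classical in
/-- The (weighted) adjacency matrix of a weighted graph. -/
noncomputable def WeightedGraph.adjMatrix {V : Type*} [Fintype V] [DecidableEq V]
    (W : WeightedGraph V) : Matrix V V ℝ :=
  fun a b => if W.G.Adj a b then W.w a b else 0

/-- `i₊`, the number of positive eigenvalues of the adjacency matrix. -/
noncomputable def WeightedGraph.iPos {V : Type*} [Fintype V] [DecidableEq V]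
    (W : WeightedGraph V) : ℕ := posInertia W.adjMatrix

/-- `i₋`, the number of negative eigenvalues of the adjacency matrix. -/
noncomputable def WeightedGraph.iNeg {V : Type*} [Fintype V] [DecidableEq V]
    (W : WeightedGraph V) : ℕ := negInertia W.adjMatrix

/-- `i₀`, the number of zero eigenvalues of the adjacency matrix. -/
noncomputable def WeightedGraph.iNul {V : Type*} [Fintype V] [DecidableEq V]
    (W : WeightedGraph V) : ℕ := nulInertia W.adjMatrix

/-- A weighted graph is bicyclic if its underlying graph is connected and has
exactly one more edge than vertices. -/
def WeightedGraph.IsBicyclic {V : Type*} [Fintype V] (W : WeightedGraph V) : Prop :=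
  W.G.Connected ∧ W.G.edgeSet.ncard = Fintype.card V + 1

/-- The graph has a pendant vertex (a vertex of degree one). -/
def WeightedGraph.HasPendant {V : Type*} (W : WeightedGraph V) : Prop :=
  ∃ x : V, (W.G.neighborSet x).ncard = 1

/-- The graph has no pendant vertices. -/
def WeightedGraph.NoPendant {V : Type*} (W : WeightedGraph V) : Prop :=
  ∀ x : V, (W.G.neighborSet x).ncard ≠ 1

/-- The base of `G` is (isomorphic to) `H`: some induced subgraph of `G` is
isomorphic to `H`.  (For a bicyclic graph `G` and a bicyclic graph `H` without
pendant vertices this induced subgraph is necessarily the unique base of `G`.) -/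
def BaseIsoTo {V B : Type*} (G : SimpleGraph V) (H : SimpleGraph B) : Prop :=
  ∃ S : Set V, Nonempty ((G.induce S) ≃g H)

/-- Vertex labels of the connecting path of `∞(p,l,q)`: the path starts at the
vertex `0` of the first cycle `0, 1, …, p-1`, and its further vertices are
`p, p+1, …`. -/
def pathVert (p j : ℕ) : ℕ := if j = 0 then 0 else p - 1 + j

/-- Vertex labels of the second cycle of `∞(p,l,q)`: it starts at the last
vertex of the connecting path and continues with `p+l-1, p+l, …`. -/
def infCyc2Vert (p l k : ℕ) : ℕ := if k = 0 then pathVert p (l - 1) else p + l - 2 + k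

/-- The edge relation of `∞(p,l,q)` on the vertex labels `0, …, p+q+l-3`:
the first cycle on `0, …, p-1`, the connecting path (on `l` vertices) from the
vertex `0`, and the second cycle attached at the last path vertex. -/
def infinityRel (p l q a b : ℕ) : Prop :=
  (a + 1 < p ∧ b = a + 1) ∨ (a = 0 ∧ b = p - 1) ∨
  (∃ j, j + 1 < l ∧ a = pathVert p j ∧ b = pathVert p (j + 1)) ∨
  (∃ k, k + 1 < q ∧ a = infCyc2Vert p l k ∧ b = infCyc2Vert p l (k + 1)) ∨
  (a = infCyc2Vert p l 0 ∧ b = infCyc2Vert p l (q - 1))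

/-- The graph `∞(p,l,q)`: two vertex-disjoint cycles of lengths `p` and `q`
joined by a path on `l` vertices (whose endpoints are identified with one
vertex on each cycle).  It has `p + q + l - 2` vertices. -/
def infinityGraph (p l q : ℕ) : SimpleGraph (Fin (p + q + l - 2)) :=
  SimpleGraph.fromRel (fun a b => infinityRel p l q a.1 b.1)

/-- The edge relation of one of the three `u,v`-paths of `θ(p,l,q)` having `m`
internal vertices, the internal vertices being labelled `o, o+1, …, o+m-1`
(`u` is the vertex `0` and `v` is the vertex `1`). -/
def thetaPathRel (m o a b : ℕ) : Prop :=
  if m = 0 then a = 0 ∧ b = 1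
  else (a = 0 ∧ b = o) ∨ (∃ i, i + 1 < m ∧ a = o + i ∧ b = o + i + 1) ∨ (a = o + m - 1 ∧ b = 1)

/-- The graph `θ(p,l,q)`: two vertices `u = 0` and `v = 1` joined by three
internally disjoint paths with `p`, `l`, `q` internal vertices respectively.
It has `p + l + q + 2` vertices. -/
def thetaGraph (p l q : ℕ) : SimpleGraph (Fin (p + l + q + 2)) :=
  SimpleGraph.fromRel (fun a b =>
    thetaPathRel p 2 a.1 b.1 ∨ thetaPathRel l (p + 2) a.1 b.1 ∨
      thetaPathRel q (p + l + 2) a.1 b.1)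

/-- The edge set of `G` is exactly the (symmetrized) list `E`. -/
def adjSpec {V : Type*} (G : SimpleGraph V) (E : List (V × V)) : Prop :=
  ∀ a b : V, G.Adj a b ↔ ((a, b) ∈ E ∨ (b, a) ∈ E)

/-- The weighted subgraph induced on a set `S` of vertices. -/
def WeightedGraph.induce {V : Type*} (W : WeightedGraph V) (S : Set V) : WeightedGraph S where
  G := W.G.induce S
  w := fun a b => W.w a b
  symm := fun a b => W.symm a b
  pos := fun a b h => W.pos a b h

/-- The `k`-th vertex (mod `n`) of a cycle on `Fin n`. -/
def cycVert (n : ℕ) (hn : 0 < n) (k : ℕ) : Fin n := ⟨k % n, Nat.mod_lt _ hn⟩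

/-- `W` is the weighted graph `θ(1,1,1)` (i.e. `K_{2,3}`) with parts `{u, v}`
and `{x1, x2, x3}`. -/
def Theta111Shape {V : Type*} (W : WeightedGraph V) (u v x1 x2 x3 : V) : Prop :=
  [u, v, x1, x2, x3].Nodup ∧ (∀ z : V, z ∈ [u, v, x1, x2, x3]) ∧
    adjSpec W.G [(u, x1), (u, x2), (u, x3), (x1, v), (x2, v), (x3, v)]

/-- `W` is the weighted graph `θ(1,0,1)` on vertices `u, v, x1, x2` with edges
`uv, ux1, x1v, ux2, x2v`. -/
def Theta101Shape {V : Type*} (W : WeightedGraph V) (u v x1 x2 : V) : Prop :=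
  [u, v, x1, x2].Nodup ∧ (∀ z : V, z ∈ [u, v, x1, x2]) ∧
    adjSpec W.G [(u, v), (u, x1), (x1, v), (u, x2), (x2, v)]

/-- `W` is the weighted graph `θ(1,0,2)` on vertices `u, v, x, y, z` with edges
`uv, ux, xv, uy, yz, zv`. -/
def Theta102Shape {V : Type*} (W : WeightedGraph V) (u v x y z : V) : Prop :=
  [u, v, x, y, z].Nodup ∧ (∀ t : V, t ∈ [u, v, x, y, z]) ∧
    adjSpec W.G [(u, v), (u, x), (x, v), (u, y), (y, z), (z, v)]

/-- `W` is the weighted graph `θ(2,0,2)` on vertices `u, v, x1, x2, y1, y2`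
with edges `uv, ux1, x1x2, x2v, uy1, y1y2, y2v`. -/
def Theta202Shape {V : Type*} (W : WeightedGraph V) (u v x1 x2 y1 y2 : V) : Prop :=
  [u, v, x1, x2, y1, y2].Nodup ∧ (∀ t : V, t ∈ [u, v, x1, x2, y1, y2]) ∧
    adjSpec W.G [(u, v), (u, x1), (x1, x2), (x2, v), (u, y1), (y1, y2), (y2, v)]

/-- `W` is the weighted graph `θ(1,1,2)` on vertices `u, v, x1, x2, y1, y2`
with edges `ux1, x1v, ux2, x2v, uy1, y1y2, y2v`. -/
def Theta112Shape {V : Type*} (W : WeightedGraph V) (u v x1 x2 y1 y2 : V) : Prop :=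
  [u, v, x1, x2, y1, y2].Nodup ∧ (∀ t : V, t ∈ [u, v, x1, x2, y1, y2]) ∧
    adjSpec W.G [(u, x1), (x1, v), (u, x2), (x2, v), (u, y1), (y1, y2), (y2, v)]

/-- `W` is the weighted graph `∞(3,1,3)`: two triangles sharing the vertex `c`. -/
def Inf313Shape {V : Type*} (W : WeightedGraph V) (c a1 a2 b1 b2 : V) : Prop :=
  [c, a1, a2, b1, b2].Nodup ∧ (∀ t : V, t ∈ [c, a1, a2, b1, b2]) ∧
    adjSpec W.G [(c, a1), (a1, a2), (a2, c), (c, b1), (b1, b2), (b2, c)]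

/-- `W` is the weighted graph `∞(3,2,3)`: the triangle `u,x,y` and the triangle
`v,s,t`, joined by the edge `uv`. -/
def Inf323Shape {V : Type*} (W : WeightedGraph V) (u v x y s t : V) : Prop :=
  [u, v, x, y, s, t].Nodup ∧ (∀ z : V, z ∈ [u, v, x, y, s, t]) ∧
    adjSpec W.G [(u, x), (x, y), (y, u), (v, s), (s, t), (t, v), (u, v)]

/-- `W` is the weighted graph `∞(3,1,4)`: the triangle `c,x,y` and the
quadrilateral `c,z1,z2,z3` sharing the vertex `c`. -/
def Inf314Shape {V : Type*} (W : WeightedGraph V) (c x y z1 z2 z3 : V) : Prop :=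
  [c, x, y, z1, z2, z3].Nodup ∧ (∀ t : V, t ∈ [c, x, y, z1, z2, z3]) ∧
    adjSpec W.G [(c, x), (x, y), (y, c), (c, z1), (z1, z2), (z2, z3), (z3, c)]

/-- `W` is the weighted graph `∞(4,1,4)`: the quadrilaterals `c,x1,x2,x3` and
`c,y1,y2,y3` sharing the vertex `c`. -/
def Inf414Shape {V : Type*} (W : WeightedGraph V) (c x1 x2 x3 y1 y2 y3 : V) : Prop :=
  [c, x1, x2, x3, y1, y2, y3].Nodup ∧ (∀ t : V, t ∈ [c, x1, x2, x3, y1, y2, y3]) ∧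
    adjSpec W.G [(c, x1), (x1, x2), (x2, x3), (x3, c), (c, y1), (y1, y2), (y2, y3), (y3, c)]

/-!
Let `A` be the adjacency matrix and `a > 0` the weight of the pendant edge `uv`. In the
coordinates `x = z + s e_u + t' e_v` with `z` supported off `{u, v}` and
`a t' = t - (A z)_u`, the quadratic form of `A` becomes `zᵀ B z + 2 s t`, where `B` is the
adjacency matrix of `G_w - u - v`. So `A` is congruent to `B` plus a hyperbolic plane, which
adds one positive and one negative square; the inertia indices are compared through their
characterisation by maximal positive (resp. non-positive) subspaces.
-/

open Module

theorem Function.extend_val_eq_zero {n R : Type*} [Zero R] {p : n → Prop} (y : {i // p i} → R)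
    {i : n} (hi : ¬ p i) :
    Function.extend Subtype.val y 0 i = 0 :=
  Function.extend_apply' _ _ _ fun ⟨j, hj⟩ => hi (hj ▸ j.2)

theorem Function.extend_dotProduct {m n R : Type*} [Fintype m] [Fintype n] [CommSemiring R]
    {f : m → n} (hf : Function.Injective f) (y : m → R) (g : n → R) :
    Function.extend f y 0 ⬝ᵥ g = y ⬝ᵥ (g ∘ f) :=
  (Fintype.sum_of_injective f hf _ _
    (fun j hj => by rw [Function.extend_apply' _ _ _ hj, Pi.zero_apply, zero_mul])
    (fun i => by rw [hf.extend_apply]; rfl)).symm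

theorem Function.extend_dotProduct_mulVec_extend {m n R : Type*} [Fintype m] [Fintype n]
    [CommSemiring R] {f : m → n} (hf : Function.Injective f) (A : Matrix n n R) (y : m → R) :
    Function.extend f y 0 ⬝ᵥ A *ᵥ Function.extend f y 0 = y ⬝ᵥ A.submatrix f f *ᵥ y := by
  rw [Function.extend_dotProduct hf]
  congr 1
  funext i
  simp only [Function.comp_apply, mulVec, dotProduct_comm (A (f i)), Function.extend_dotProduct hf]
  exact dotProduct_comm _ _

section PositiveIndex

variable {M N : Type*} [AddCommGroup M] [Module ℝ M] [AddCommGroup N] [Module ℝ N]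

def HasPositiveIndex (q : M → ℝ) (d : ℕ) : Prop :=
  ∃ P Q : Submodule ℝ M, finrank ℝ P = d ∧ finrank ℝ P + finrank ℝ Q = finrank ℝ M ∧
    (∀ x ∈ P, x ≠ 0 → 0 < q x) ∧ ∀ x ∈ Q, q x ≤ 0

theorem finrank_add_finrank_le_of_pos_of_nonpos [FiniteDimensional ℝ M] {q : M → ℝ}
    {P Q : Submodule ℝ M} (hP : ∀ x ∈ P, x ≠ 0 → 0 < q x) (hQ : ∀ x ∈ Q, q x ≤ 0) :
    finrank ℝ P + finrank ℝ Q ≤ finrank ℝ M :=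
  Submodule.finrank_add_finrank_le_of_disjoint <| Submodule.disjoint_def.2 fun x hxP hxQ =>
    by_contra fun hx => (hQ x hxQ).not_gt (hP x hxP hx)

theorem HasPositiveIndex.unique [FiniteDimensional ℝ M] {q : M → ℝ} {d d' : ℕ}
    (h : HasPositiveIndex q d) (h' : HasPositiveIndex q d') : d = d' := by
  obtain ⟨P, Q, rfl, hPQ, hP, hQ⟩ := h
  obtain ⟨P', Q', rfl, hPQ', hP', hQ'⟩ := h'
  have := finrank_add_finrank_le_of_pos_of_nonpos hP hQ'
  have := finrank_add_finrank_le_of_pos_of_nonpos hP' hQ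
  omega

theorem HasPositiveIndex.of_injective {p : M → ℝ} {q : N → ℝ} {d : ℕ}
    (h : HasPositiveIndex p d) (f : M →ₗ[ℝ] N) (hf : Function.Injective f)
    (hdim : finrank ℝ M = finrank ℝ N) (hq : ∀ x, q (f x) = p x) : HasPositiveIndex q d := by
  obtain ⟨P, Q, rfl, hPQ, hP, hQ⟩ := h
  have hmap (R : Submodule ℝ M) : finrank ℝ (R.map f) = finrank ℝ R :=
    (Submodule.equivMapOfInjective f hf R).finrank_eq.symm
  refine ⟨P.map f, Q.map f, hmap P, by rw [hmap, hmap, hPQ, hdim], ?_, ?_⟩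
  · rintro _ ⟨x, hx, rfl⟩ hfx
    rw [hq]
    exact hP x hx (by rintro rfl; exact hfx (map_zero f))
  · rintro _ ⟨x, hx, rfl⟩
    rw [hq]
    exact hQ x hx

theorem Submodule.exists_prod_line (R : Submodule ℝ M) [FiniteDimensional ℝ R]
    (k : ℝ) : ∃ R' : Submodule ℝ (M × ℝ × ℝ), finrank ℝ R' = finrank ℝ R + 1 ∧
      ∀ x ∈ R', ∃ y ∈ R, ∃ s : ℝ, x = (y, s, k * s) := by
  let f : R × ℝ →ₗ[ℝ] M × ℝ × ℝ := R.subtype.prodMap (LinearMap.id.prod (k • LinearMap.id))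
  have hf : Function.Injective f := by
    rintro ⟨y, s⟩ ⟨y', s'⟩ h
    simp only [f, LinearMap.prodMap_apply, LinearMap.prod_apply, Prod.mk.injEq] at h
    exact Prod.ext (Subtype.ext h.1) (congrArg Prod.fst h.2)
  refine ⟨LinearMap.range f, ?_, ?_⟩
  · rw [LinearMap.finrank_range_of_inj hf, finrank_prod, finrank_self]
  · rintro _ ⟨⟨y, s⟩, rfl⟩
    exact ⟨y, y.2, s, rfl⟩

theorem HasPositiveIndex.prod_hyperbolic [FiniteDimensional ℝ M] {q : M → ℝ} {d : ℕ}
    (h : HasPositiveIndex q d) (hq : q 0 = 0) {c : ℝ} (hc : c ≠ 0) :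
    HasPositiveIndex (fun x : M × ℝ × ℝ => q x.1 + c * x.2.1 * x.2.2) (d + 1) := by
  obtain ⟨P, Q, rfl, hPQ, hP, hQ⟩ := h
  obtain ⟨P', hP'r, hP'⟩ := P.exists_prod_line c
  obtain ⟨Q', hQ'r, hQ'⟩ := Q.exists_prod_line (-c)
  refine ⟨P', Q', hP'r, ?_, ?_, ?_⟩
  · rw [hP'r, hQ'r, finrank_prod, finrank_prod, finrank_self]
    omega
  · intro x hx hx0
    obtain ⟨y, hy, s, rfl⟩ := hP' x hx
    by_cases hy0 : y = 0
    · subst hy0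
      have hs : s ≠ 0 := by rintro rfl; simp at hx0
      have : 0 < c * s * (c * s) := mul_self_pos.2 (mul_ne_zero hc hs)
      simp only [hq]
      linarith
    · have := hP y hy hy0
      have := mul_self_nonneg (c * s)
      dsimp only
      linarith
  · intro x hx
    obtain ⟨y, hy, s, rfl⟩ := hQ' x hx
    have := hQ y hy
    dsimp only
    nlinarith [mul_self_nonneg (c * s)]

variable {n : Type*} [Fintype n]

theorem hasPositiveIndex_sum_mul_sq (μ : n → ℝ) :
    HasPositiveIndex (fun c : n → ℝ => ∑ i, μ i * c i ^ 2) (Fintype.card {i // 0 < μ i}) := by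
  classical
  let supported (p : n → Prop) : Submodule ℝ (n → ℝ) :=
    LinearMap.range (Function.ExtendByZero.linearMap ℝ (Subtype.val : {i // p i} → n))
  have hrank (p : n → Prop) : finrank ℝ (supported p) = Fintype.card {i // p i} := by
    rw [LinearMap.finrank_range_of_inj (Function.extend_injective Subtype.val_injective _),
      finrank_fintype_fun_eq_card]
  refine ⟨supported (0 < μ ·), supported (¬ 0 < μ ·), hrank _, ?_, ?_, ?_⟩
  · rw [hrank, hrank, Fintype.card_subtype_compl, finrank_fintype_fun_eq_card]
    have := Fintype.card_subtype_le (0 < μ ·)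
    omega
  · rintro _ ⟨y, rfl⟩ hy
    obtain ⟨j, hj⟩ := Function.ne_iff.1 hy
    have hμj : 0 < μ j := by_contra fun h => hj (Function.extend_val_eq_zero y h)
    refine Finset.sum_pos' (fun i _ => ?_)
      ⟨j, Finset.mem_univ j, mul_pos hμj (sq_pos_of_ne_zero hj)⟩
    by_cases hi : 0 < μ i
    · positivity
    · simp [Function.extend_val_eq_zero y hi]
  · rintro _ ⟨y, rfl⟩
    refine Finset.sum_nonpos fun i _ => ?_
    by_cases hi : 0 < μ i
    · simp [Function.extend_val_eq_zero y (not_not_intro hi)]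
    · exact mul_nonpos_of_nonpos_of_nonneg (not_lt.1 hi) (sq_nonneg _)

theorem Matrix.IsHermitian.dotProduct_mulVec_eigenvectorUnitary [DecidableEq n]
    {A : Matrix n n ℝ} (hA : A.IsHermitian) (c : n → ℝ) :
    (hA.eigenvectorUnitary : Matrix n n ℝ) *ᵥ c ⬝ᵥ
        A *ᵥ ((hA.eigenvectorUnitary : Matrix n n ℝ) *ᵥ c) =
      ∑ i, hA.eigenvalues i * c i ^ 2 := by
  set U : Matrix n n ℝ := ↑hA.eigenvectorUnitary
  have hdiag : Uᵀ * A * U = diagonal hA.eigenvalues := by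
    have := hA.conjStarAlgAut_star_eigenvectorUnitary
    rwa [Unitary.conjStarAlgAut_star_apply, star_eq_conjTranspose,
      conjTranspose_eq_transpose_of_trivial] at this
  have hconj : U *ᵥ c ⬝ᵥ A *ᵥ (U *ᵥ c) = c ⬝ᵥ (Uᵀ * A * U) *ᵥ c := by
    rw [← mulVec_mulVec, ← mulVec_mulVec, dotProduct_mulVec c, vecMul_transpose]
  rw [hconj, hdiag, dotProduct]
  exact Finset.sum_congr rfl fun i _ => by rw [mulVec_diagonal]; ring

theorem Matrix.IsHermitian.mulVec_eigenvectorUnitary_injective [DecidableEq n]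
    {A : Matrix n n ℝ} (hA : A.IsHermitian) :
    Function.Injective ((hA.eigenvectorUnitary : Matrix n n ℝ) *ᵥ ·) :=
  Function.LeftInverse.injective (g := (star (hA.eigenvectorUnitary : Matrix n n ℝ) *ᵥ ·))
    fun x => by dsimp only; rw [mulVec_mulVec, Unitary.coe_star_mul_self, one_mulVec]

theorem Matrix.IsHermitian.hasPositiveIndex_posInertia [DecidableEq n] {A : Matrix n n ℝ}
    (hA : A.IsHermitian) : HasPositiveIndex (fun x => x ⬝ᵥ A *ᵥ x) (posInertia A) := by
  rw [posInertia, dif_pos hA]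
  exact (hasPositiveIndex_sum_mul_sq _).of_injective (mulVecLin _)
    hA.mulVec_eigenvectorUnitary_injective rfl hA.dotProduct_mulVec_eigenvectorUnitary

theorem Matrix.IsHermitian.hasPositiveIndex_negInertia [DecidableEq n] {A : Matrix n n ℝ}
    (hA : A.IsHermitian) : HasPositiveIndex (fun x => -(x ⬝ᵥ A *ᵥ x)) (negInertia A) := by
  rw [negInertia, dif_pos hA]
  convert (hasPositiveIndex_sum_mul_sq (-hA.eigenvalues)).of_injective (mulVecLin _)
    hA.mulVec_eigenvectorUnitary_injective rfl fun c => ?_ using 1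
  · exact Fintype.card_congr (Equiv.subtypeEquivRight fun i => neg_pos.symm)
  · rw [mulVecLin_apply, hA.dotProduct_mulVec_eigenvectorUnitary]
    simp only [Pi.neg_apply, neg_mul, Finset.sum_neg_distrib]

end PositiveIndex

theorem inertia_eq_add_one_of_hyperbolic_split {m V : Type*} [Fintype m] [DecidableEq m]
    [Fintype V] [DecidableEq V] {A : Matrix V V ℝ} {B : Matrix m m ℝ} (hA : A.IsHermitian)
    (hB : B.IsHermitian) (Φ : (m → ℝ) × ℝ × ℝ →ₗ[ℝ] V → ℝ) (hΦ : Function.Injective Φ)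
    (hcard : Fintype.card m + 2 = Fintype.card V)
    (hq : ∀ x, Φ x ⬝ᵥ A *ᵥ Φ x = x.1 ⬝ᵥ B *ᵥ x.1 + 2 * x.2.1 * x.2.2) :
    posInertia A = posInertia B + 1 ∧ negInertia A = negInertia B + 1 := by
  have hdim : finrank ℝ ((m → ℝ) × ℝ × ℝ) = finrank ℝ (V → ℝ) := by
    simp only [finrank_prod, finrank_self, finrank_fintype_fun_eq_card, ← hcard]
  constructor
  · exact hA.hasPositiveIndex_posInertia.unique <|
      (hB.hasPositiveIndex_posInertia.prod_hyperbolic (by simp) two_ne_zero).of_injective Φ hΦ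
        hdim hq
  · refine hA.hasPositiveIndex_negInertia.unique <|
      (hB.hasPositiveIndex_negInertia.prod_hyperbolic (by simp)
        (neg_ne_zero.2 two_ne_zero)).of_injective Φ hΦ hdim fun x => ?_
    rw [hq]
    ring

section Pendant

variable {V : Type*} [Fintype V] [DecidableEq V]

theorem dotProduct_mulVec_add_single_add_single {R : Type*} [CommRing R] {A : Matrix V V R}
    (hA : A.IsSymm) {u v : V} {a : R} (huv : u ≠ v) (hv : ∀ j, A v j = if j = u then a else 0)
    (huu : A u u = 0)
    {z : V → R} (hz : z u = 0) (s t : R) :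
    (z + Pi.single u s + Pi.single v t) ⬝ᵥ A *ᵥ (z + Pi.single u s + Pi.single v t) =
      z ⬝ᵥ A *ᵥ z + 2 * s * ((A *ᵥ z) u + a * t) := by
  have hzA : z ᵥ* A = A *ᵥ z := by rw [← mulVec_transpose, hA.eq]
  have hrow (j : V) : A.row j ⬝ᵥ z = (A *ᵥ z) j := rfl
  have hAzv : (A *ᵥ z) v = 0 := by simp [mulVec, dotProduct, hv, hz]
  have hAuv : A u v = a := by rw [hA.apply, hv, if_pos rfl]
  have hAvv : A v v = 0 := by rw [hv, if_neg huv.symm]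
  have hAvu : A v u = a := by rw [hv, if_pos rfl]
  rw [dotProduct_mulVec]
  simp only [add_vecMul, hzA, single_vecMul, add_dotProduct, dotProduct_add, dotProduct_single]
  simp only [smul_dotProduct, hrow, Pi.add_apply, Pi.smul_apply, row_apply, smul_eq_mul, hAzv,
    huu, hAuv, hAvu, hAvv, dotProduct_comm z]
  ring

noncomputable def pendantCoords (A : Matrix V V ℝ) (S : Set V) (u v : V) (a : ℝ) :
    (S → ℝ) × ℝ × ℝ →ₗ[ℝ] V → ℝ :=
  let E := Function.ExtendByZero.linearMap ℝ (Subtype.val : S → V) ∘ₗ LinearMap.fst ℝ _ _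
  E + LinearMap.single ℝ (fun _ => ℝ) u ∘ₗ LinearMap.fst ℝ _ _ ∘ₗ LinearMap.snd ℝ _ _ +
    LinearMap.single ℝ (fun _ => ℝ) v ∘ₗ (a⁻¹ •
      (LinearMap.snd ℝ _ _ ∘ₗ LinearMap.snd ℝ _ _ - LinearMap.proj u ∘ₗ A.mulVecLin ∘ₗ E))

theorem pendantCoords_apply (A : Matrix V V ℝ) (S : Set V) (u v : V) (a : ℝ)
    (x : (S → ℝ) × ℝ × ℝ) :
    pendantCoords A S u v a x = Function.extend Subtype.val x.1 0 + Pi.single u x.2.1 +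
      Pi.single v (a⁻¹ * (x.2.2 - (A *ᵥ Function.extend Subtype.val x.1 0) u)) :=
  rfl

variable {A : Matrix V V ℝ} {S : Set V} {u v : V} {a : ℝ}

theorem pendantCoords_injective (huv : u ≠ v) (hu : u ∉ S) (hv : v ∉ S) (ha : a ≠ 0) :
    Function.Injective (pendantCoords A S u v a) := by
  refine (injective_iff_map_eq_zero _).2 fun ⟨y, s, t⟩ h => ?_
  simp only [pendantCoords_apply] at h
  have hy : y = 0 := funext fun i => by
    have := congrFun h i
    have hiu : (i : V) ≠ u := fun h => hu (h ▸ i.2)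
    have hiv : (i : V) ≠ v := fun h => hv (h ▸ i.2)
    simpa [Pi.single_apply, hiu, hiv, Subtype.val_injective.extend_apply] using this
  subst hy
  have hs : s = 0 := by simpa [Function.extend_zero, huv] using congrFun h u
  have ht : t = 0 := by simpa [Function.extend_zero, huv.symm, ha] using congrFun h v
  subst hs ht
  rfl

theorem dotProduct_mulVec_pendantCoords [Fintype S] (hA : A.IsSymm) (huv : u ≠ v)
    (hv : ∀ j, A v j = if j = u then a else 0) (huu : A u u = 0) (ha : a ≠ 0) (hu : u ∉ S)
    (x : (S → ℝ) × ℝ × ℝ) :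
    pendantCoords A S u v a x ⬝ᵥ A *ᵥ pendantCoords A S u v a x =
      x.1 ⬝ᵥ A.submatrix (↑) (↑) *ᵥ x.1 + 2 * x.2.1 * x.2.2 := by
  rw [pendantCoords_apply, dotProduct_mulVec_add_single_add_single hA huv hv huu
    (Function.extend_val_eq_zero (p := (· ∈ S)) _ hu),
    Function.extend_dotProduct_mulVec_extend (Subtype.val_injective (p := (· ∈ S))),
    mul_inv_cancel_left₀ ha]
  ring

theorem card_ne_and_ne_add_two (huv : u ≠ v) :
    Fintype.card {x : V | x ≠ u ∧ x ≠ v} + 2 = Fintype.card V := by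
  have hS : {x : V | x ≠ u ∧ x ≠ v}.toFinset = (Finset.univ.erase u).erase v := by
    ext
    simp [and_comm]
  rw [← Set.toFinset_card, hS, ← Finset.card_univ, ← Finset.card_erase_add_one (Finset.mem_univ u),
    ← Finset.card_erase_add_one (Finset.mem_erase.2 ⟨huv.symm, Finset.mem_univ v⟩)]

end Pendant

namespace WeightedGraph

variable {V : Type*} [Fintype V] [DecidableEq V] (W : WeightedGraph V)

theorem adjMatrix_isSymm : W.adjMatrix.IsSymm := by
  ext i j
  by_cases h : W.G.Adj j i
  · simp [adjMatrix, h, h.symm, W.symm i j]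
  · have h' : ¬W.G.Adj i j := fun h' => h h'.symm
    simp [adjMatrix, h, h']

theorem adjMatrix_isHermitian : W.adjMatrix.IsHermitian :=
  isHermitian_iff_isSymm.2 W.adjMatrix_isSymm

theorem adjMatrix_induce (S : Set V) [Fintype S] :
    (W.induce S).adjMatrix = W.adjMatrix.submatrix (↑) (↑) :=
  rfl

theorem adjMatrix_self (x : V) : W.adjMatrix x x = 0 := by
  simp [adjMatrix]

theorem adjMatrix_apply_of_neighborSet_eq {u v : V} (h : W.G.neighborSet v = {u}) (j : V) :
    W.adjMatrix v j = if j = u then W.w v u else 0 := by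
  have hadj : W.G.Adj v j ↔ j = u := by
    rw [← SimpleGraph.mem_neighborSet, h, Set.mem_singleton_iff]
  by_cases hj : j = u
  · subst hj
    simp [adjMatrix, hadj]
  · simp [adjMatrix, hadj, hj]

end WeightedGraph

/-- deleting a pendant vertex `v` together with its unique
neighbor `u` decreases both the positive and the negative inertia index by
exactly one. -/
theorem stmt16 {V : Type*} [Fintype V] [DecidableEq V] (W : WeightedGraph V)
    (u v : V) (hpend : W.G.neighborSet v = {u}) :
    W.iPos = (W.induce {x : V | x ≠ u ∧ x ≠ v}).iPos + 1 ∧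
    W.iNeg = (W.induce {x : V | x ≠ u ∧ x ≠ v}).iNeg + 1 := by
  have hvu : W.G.Adj v u := by
    rw [← SimpleGraph.mem_neighborSet, hpend]
    rfl
  have huv : u ≠ v := hvu.ne'
  have ha : W.w v u ≠ 0 := (W.pos v u hvu).ne'
  have hu : u ∉ {x : V | x ≠ u ∧ x ≠ v} := fun h => h.1 rfl
  have hv : v ∉ {x : V | x ≠ u ∧ x ≠ v} := fun h => h.2 rfl
  rw [WeightedGraph.iPos, WeightedGraph.iNeg, WeightedGraph.iPos, WeightedGraph.iNeg,
    WeightedGraph.adjMatrix_induce]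
  exact inertia_eq_add_one_of_hyperbolic_split W.adjMatrix_isHermitian
    (W.adjMatrix_isHermitian.submatrix _) _ (pendantCoords_injective huv hu hv ha)
    (card_ne_and_ne_add_two huv)
    (dotProduct_mulVec_pendantCoords W.adjMatrix_isSymm huv
      (W.adjMatrix_apply_of_neighborSet_eq hpend) (W.adjMatrix_self u) ha hu)
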